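/- In a parity game, exactly one of the two players has a winning strategy from each position (positional determinacy restricted to finite games suffices): for a finite parity game (V, V₀, V₁, E, Ω) with every position having at least one outgoing edge, the winning regions of player 0 and player 1 partition V. -/

import Mathlib

/-- A positional strategy for the player owning the positions in `Vi`:
it must select an outgoing edge at every position of `Vi`. -/
def IsStrategy {V : Type*} (Vi : Set V) (E : V → V → Prop) (σ : V → V) : Prop :=
  ∀ v ∈ Vi, E v (σ v)

/-- A play from `v` consistent with the strategy `σ` of the player owning
`Vi`: an infinite path along edges that follows `σ` on `Vi`. -/
def ConsistentPlay {V : Type*} (Vi : Set V) (E : V → V → Prop) (σ : V → V)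
    (v : V) (π : ℕ → V) : Prop :=
  π 0 = v ∧ ∀ n, E (π n) (π (n + 1)) ∧ (π n ∈ Vi → π (n + 1) = σ (π n))

/-- Player 0 wins a play iff the maximal priority occurring infinitely often
is even. -/
def Wins0 {V : Type*} (Ω : V → ℕ) (π : ℕ → V) : Prop :=
  Even (sSup {p | {n | Ω (π n) = p}.Infinite})

/-!
Zielonka's argument, by induction on the size of a subgame `U` (a set of positions in which
every position keeps a successor). Let `p` be the largest priority in `U` and `i` the player of
parity `p`. Outside the `i`-attractor `A` of the positions of priority `p` lies a smaller subgame,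
split by induction into regions `Yᵢ` and `Yⱼ`. If `Yⱼ` is empty, player `i` wins everywhere: a
play either returns to `A`, hence to priority `p`, infinitely often, or it eventually stays in
`U \ A`, where `i` wins. Otherwise player `j` wins on the `j`-attractor `B` of `Yⱼ`, because
`U \ A` is a trap for `i`; solving the smaller subgame `U \ B`, which is a trap for `j`, gives
the rest. All strategies built this way are positional.
-/

theorem Nat.infinite_setOf_add_iff {Q : ℕ → Prop} (k : ℕ) :
    {n | Q (k + n)}.Infinite ↔ {n | Q n}.Infinite := by
  simp_rw [← Nat.frequently_atTop_iff_infinite, add_comm k, ← Filter.frequently_map (m := (· + k)),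
    Filter.map_add_atTop_eq_nat]

namespace ParityGame

variable {V : Type*}

section Arena

variable {E : V → V → Prop} {O U U' W : Set V} {σ σ' : V → V} {π : ℕ → V}

def IsSubgame (E : V → V → Prop) (U : Set V) : Prop :=
  ∀ v ∈ U, ∃ w ∈ U, E v w

/-- `σ` is a strategy, inside the subgame `U`, of the player owning the positions in `O`. -/
def IsStrategyIn (E : V → V → Prop) (O U : Set V) (σ : V → V) : Prop :=
  ∀ v ∈ U, v ∈ O → E v (σ v) ∧ σ v ∈ U

def IsPlay (E : V → V → Prop) (O U : Set V) (σ : V → V) (π : ℕ → V) : Prop :=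
  ∀ n, π n ∈ U ∧ E (π n) (π (n + 1)) ∧ (π n ∈ O → π (n + 1) = σ (π n))

def PrefixIndependent (Win : (ℕ → V) → Prop) : Prop :=
  ∀ π k, Win (fun n => π (k + n)) ↔ Win π

/-- Besides winning every play from `W`, the strategy `σ` keeps every play inside `W`. -/
structure IsWinningStrategy (E : V → V → Prop) (O U : Set V) (Win : (ℕ → V) → Prop)
    (W : Set V) (σ : V → V) : Prop where
  subset : W ⊆ U
  isStrategyIn : IsStrategyIn E O U σ
  mem_own : ∀ v ∈ W, v ∈ O → σ v ∈ W
  mem_opp : ∀ v ∈ W, v ∉ O → ∀ w ∈ U, E v w → w ∈ W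
  wins : ∀ π, IsPlay E O U σ π → π 0 ∈ W → Win π

theorem IsSubgame.exists_isStrategyIn (hU : IsSubgame E U) (O : Set V) :
    ∃ σ, IsStrategyIn E O U σ := by
  choose! σ hσ using hU
  exact ⟨σ, fun v hv _ => ⟨(hσ v hv).2, (hσ v hv).1⟩⟩

theorem IsPlay.shift (hπ : IsPlay E O U σ π) (k : ℕ) :
    IsPlay E O U σ (fun n => π (k + n)) :=
  fun n => hπ (k + n)

theorem IsPlay.restrict (hπ : IsPlay E O U σ π) (hmem : ∀ n, π n ∈ U')
    (heq : ∀ n, π n ∈ O → σ (π n) = σ' (π n)) : IsPlay E O U' σ' π :=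
  fun n => ⟨hmem n, (hπ n).2.1, fun hO => ((hπ n).2.2 hO).trans (heq n hO)⟩

theorem IsPlay.mem_of_closed (hπ : IsPlay E O U σ π) (hown : ∀ v ∈ W, v ∈ O → σ v ∈ W)
    (hopp : ∀ v ∈ W, v ∉ O → ∀ w ∈ U, E v w → w ∈ W) (h0 : π 0 ∈ W) : ∀ n, π n ∈ W
  | 0 => h0
  | n + 1 => by
    have ih := hπ.mem_of_closed hown hopp h0 n
    by_cases hO : π n ∈ O
    · exact (hπ n).2.2 hO ▸ hown _ ih hO
    · exact hopp _ ih hO _ (hπ (n + 1)).1 (hπ n).2.1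

theorem isWinningStrategy_empty {Win : (ℕ → V) → Prop} (hσ : IsStrategyIn E O U σ) :
    IsWinningStrategy E O U Win ∅ σ :=
  ⟨Set.empty_subset U, hσ, fun _ h => h.elim, fun _ h => h.elim, fun _ _ h => h.elim⟩

namespace IsWinningStrategy

variable {Win : (ℕ → V) → Prop}

theorem wins_of_mem (h : IsWinningStrategy E O U Win W σ) (hWin : PrefixIndependent Win)
    (hπ : IsPlay E O U σ π) {k : ℕ} (hk : π k ∈ W) : Win π :=
  (hWin π k).1 (h.wins _ (hπ.shift k) hk)

theorem extend (h : IsWinningStrategy E O U' Win W σ) (hU : U' ⊆ U)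
    (hesc : ∀ v ∈ W, v ∉ O → ∀ w ∈ U, E v w → w ∈ U') (hσ' : IsStrategyIn E O U σ')
    (heq : ∀ v ∈ W, v ∈ O → σ' v = σ v) : IsWinningStrategy E O U Win W σ' := by
  have hown : ∀ v ∈ W, v ∈ O → σ' v ∈ W := fun v hv hO => heq v hv hO ▸ h.mem_own v hv hO
  have hopp : ∀ v ∈ W, v ∉ O → ∀ w ∈ U, E v w → w ∈ W := fun v hv hO w hw he =>
    h.mem_opp v hv hO w (hesc v hv hO w hw he) he
  refine ⟨h.subset.trans hU, hσ', hown, hopp, fun π hπ h0 => h.wins π ?_ h0⟩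
  have hmem := hπ.mem_of_closed hown hopp h0
  exact hπ.restrict (fun n => h.subset (hmem n)) fun n hO => heq _ (hmem n) hO

theorem exists_extend (h : IsWinningStrategy E O U' Win W σ) (hU : IsSubgame E U)
    (hU' : U' ⊆ U) (hesc : ∀ v ∈ W, v ∉ O → ∀ w ∈ U, E v w → w ∈ U') :
    ∃ σ', IsWinningStrategy E O U Win W σ' := by
  classical
  obtain ⟨δ, hδ⟩ := hU.exists_isStrategyIn O
  refine ⟨W.piecewise σ δ, h.extend hU' hesc (fun v hv hO => ?_)
    fun v hv _ => Set.piecewise_eq_of_mem _ _ _ hv⟩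
  by_cases hvW : v ∈ W
  · rw [Set.piecewise_eq_of_mem _ _ _ hvW]
    obtain ⟨he, hmem⟩ := h.isStrategyIn v (h.subset hvW) hO
    exact ⟨he, hU' hmem⟩
  · rw [Set.piecewise_eq_of_notMem _ _ _ hvW]
    exact hδ v hv hO

/-- Gluing: once the play enters `B` it stays there and is won, and a play that never enters
`B` is a play of the subgame `U \ B`. -/
theorem exists_union {B Z : Set V} {ρ : V → V} (hB : IsWinningStrategy E O U Win B σ)
    (hZ : IsWinningStrategy E O (U \ B) Win Z ρ) (hWin : PrefixIndependent Win) :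
    ∃ σ', IsWinningStrategy E O U Win (Z ∪ B) σ' := by
  classical
  have hσ' : IsStrategyIn E O U (B.piecewise σ ρ) := fun v hv hO => by
    by_cases hvB : v ∈ B
    · rw [Set.piecewise_eq_of_mem _ _ _ hvB]
      exact hB.isStrategyIn v hv hO
    · rw [Set.piecewise_eq_of_notMem _ _ _ hvB]
      exact (hZ.isStrategyIn v ⟨hv, hvB⟩ hO).imp_right And.left
  have hB' := hB.extend subset_rfl (fun _ _ _ w hw _ => hw) hσ'
    fun v hv _ => Set.piecewise_eq_of_mem _ _ _ hv
  refine ⟨B.piecewise σ ρ, Set.union_subset (hZ.subset.trans Set.sdiff_subset) hB.subset, hσ',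
    ?_, ?_, fun π hπ h0 => ?_⟩
  · rintro v (hv | hv) hO
    · by_cases hvB : v ∈ B
      · exact Or.inr (hB'.mem_own v hvB hO)
      · rw [Set.piecewise_eq_of_notMem _ _ _ hvB]
        exact Or.inl (hZ.mem_own v hv hO)
    · exact Or.inr (hB'.mem_own v hv hO)
  · rintro v (hv | hv) hO w hw he
    · by_cases hwB : w ∈ B
      · exact Or.inr hwB
      · exact Or.inl (hZ.mem_opp v hv hO w ⟨hw, hwB⟩ he)
    · exact Or.inr (hB'.mem_opp v hv hO w hw he)
  by_cases hvisit : ∃ k, π k ∈ B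
  · obtain ⟨k, hk⟩ := hvisit
    exact hB'.wins_of_mem hWin hπ hk
  · rw [not_exists] at hvisit
    refine hZ.wins π (hπ.restrict (fun n => ⟨(hπ n).1, hvisit n⟩) fun n _ => ?_) ?_
    · exact Set.piecewise_eq_of_notMem _ _ _ (hvisit n)
    · exact h0.resolve_right (hvisit 0)

end IsWinningStrategy

end Arena

section Attractor

variable (E : V → V → Prop) (O U T : Set V)

def attractorLevel : ℕ → Set V
  | 0 => T
  | n + 1 => attractorLevel n ∪ {v | v ∈ U ∧ ((v ∈ O ∧ ∃ w ∈ attractorLevel n, E v w) ∨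
      (v ∉ O ∧ ∀ w ∈ U, E v w → w ∈ attractorLevel n))}

def attractor : Set V := ⋃ n, attractorLevel E O U T n

noncomputable def attractorRank (v : V) : ℕ := sInf {n | v ∈ attractorLevel E O U T n}

open Classical in
noncomputable def attractorStrategy (σ : V → V) (v : V) : V :=
  if h : v ∈ attractor E O U T \ T ∧ ∃ w, E v w ∧ w ∈ attractor E O U T ∧
      attractorRank E O U T w < attractorRank E O U T v
  then h.2.choose else σ v

variable {E O U T} {σ : V → V} {π : ℕ → V} {v w : V}

theorem attractorLevel_mono : Monotone (attractorLevel E O U T) :=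
  monotone_nat_of_le_succ fun _ => Set.subset_union_left

theorem subset_attractor : T ⊆ attractor E O U T :=
  fun _ hv => Set.mem_iUnion.2 ⟨0, hv⟩

theorem attractorLevel_subset (hT : T ⊆ U) : ∀ n, attractorLevel E O U T n ⊆ U
  | 0 => hT
  | n + 1 => Set.union_subset (attractorLevel_subset hT n) fun _ hv => hv.1

theorem attractor_subset (hT : T ⊆ U) : attractor E O U T ⊆ U :=
  Set.iUnion_subset (attractorLevel_subset hT)

theorem mem_attractorLevel_attractorRank (hv : v ∈ attractor E O U T) :
    v ∈ attractorLevel E O U T (attractorRank E O U T v) :=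
  Nat.sInf_mem (Set.mem_iUnion.1 hv)

theorem attractorRank_le {n : ℕ} (hv : v ∈ attractorLevel E O U T n) :
    attractorRank E O U T v ≤ n :=
  Nat.sInf_le hv

theorem attractorRank_lt_of_mem_attractor (hv : v ∈ attractor E O U T) (hvT : v ∉ T) :
    (v ∈ O → ∃ w, E v w ∧ w ∈ attractor E O U T ∧
      attractorRank E O U T w < attractorRank E O U T v) ∧
    (v ∉ O → ∀ w ∈ U, E v w → w ∈ attractor E O U T ∧
      attractorRank E O U T w < attractorRank E O U T v) := by
  have hrank := mem_attractorLevel_attractorRank hv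
  obtain ⟨n, hn⟩ : ∃ n, attractorRank E O U T v = n + 1 :=
    Nat.exists_eq_succ_of_ne_zero fun h => hvT (by rwa [h] at hrank)
  rw [hn] at hrank
  have hvn : v ∉ attractorLevel E O U T n :=
    Nat.notMem_of_lt_sInf (show n < attractorRank E O U T v by omega)
  have hlt {w : V} (hw : w ∈ attractorLevel E O U T n) :
      w ∈ attractor E O U T ∧ attractorRank E O U T w < attractorRank E O U T v :=
    ⟨Set.mem_iUnion.2 ⟨n, hw⟩, hn ▸ Nat.lt_succ_of_le (attractorRank_le hw)⟩
  rcases hrank with h | ⟨-, ⟨hO, w, hw, he⟩ | ⟨hO, hall⟩⟩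
  · exact absurd h hvn
  · exact ⟨fun _ => ⟨w, he, hlt hw⟩, fun h => absurd hO h⟩
  · exact ⟨fun h => absurd h hO, fun _ w hwU he => hlt (hall w hwU he)⟩

theorem attractorStrategy_of_notMem (hv : v ∉ attractor E O U T \ T) :
    attractorStrategy E O U T σ v = σ v :=
  dif_neg fun h => hv h.1

theorem attractorStrategy_spec (hv : v ∈ attractor E O U T) (hvT : v ∉ T) (hO : v ∈ O) :
    E v (attractorStrategy E O U T σ v) ∧
      attractorStrategy E O U T σ v ∈ attractor E O U T ∧
      attractorRank E O U T (attractorStrategy E O U T σ v) < attractorRank E O U T v := by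
  have h := (attractorRank_lt_of_mem_attractor hv hvT).1 hO
  rw [attractorStrategy, dif_pos ⟨⟨hv, hvT⟩, h⟩]
  exact h.choose_spec

theorem isStrategyIn_attractorStrategy (hT : T ⊆ U) (hσ : IsStrategyIn E O U σ) :
    IsStrategyIn E O U (attractorStrategy E O U T σ) := fun v hv hO => by
  by_cases hvA : v ∈ attractor E O U T \ T
  · obtain ⟨he, hmem, -⟩ := attractorStrategy_spec hvA.1 hvA.2 hO (σ := σ)
    exact ⟨he, attractor_subset hT hmem⟩
  · rw [attractorStrategy_of_notMem hvA]
    exact hσ v hv hO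

/-- The attractor strategy reaches `T` because the rank decreases at every move. -/
theorem IsPlay.exists_mem_of_mem_attractor (hπ : IsPlay E O U (attractorStrategy E O U T σ) π)
    {k : ℕ} (hk : π k ∈ attractor E O U T) : ∃ m, k ≤ m ∧ π m ∈ T := by
  induction hr : attractorRank E O U T (π k) using Nat.strong_induction_on generalizing k with
  | _ r ih =>
  by_cases hkT : π k ∈ T
  · exact ⟨k, le_rfl, hkT⟩
  obtain ⟨hnext, hlt⟩ : π (k + 1) ∈ attractor E O U T ∧
      attractorRank E O U T (π (k + 1)) < attractorRank E O U T (π k) := by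
    by_cases hO : π k ∈ O
    · rw [(hπ k).2.2 hO]
      exact (attractorStrategy_spec hk hkT hO).2
    · exact (attractorRank_lt_of_mem_attractor hk hkT).2 hO _ (hπ (k + 1)).1 (hπ k).2.1
  obtain ⟨m, hkm, hm⟩ := ih _ (hr ▸ hlt) hnext rfl
  exact ⟨m, by omega, hm⟩

theorem mem_diff_attractor_of_mem (hv : v ∈ U \ attractor E O U T) (hO : v ∈ O) (he : E v w)
    (hw : w ∈ U) : w ∈ U \ attractor E O U T := by
  refine ⟨hw, fun hwA => hv.2 ?_⟩
  obtain ⟨n, hn⟩ := Set.mem_iUnion.1 hwA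
  exact Set.mem_iUnion.2 ⟨n + 1, Or.inr ⟨hv.1, Or.inl ⟨hO, w, hn, he⟩⟩⟩

/-- Finitely many successors have bounded rank, so if they all lay in the attractor, so would
`v`. -/
theorem exists_mem_diff_attractor_of_notMem [Finite V] (hv : v ∈ U \ attractor E O U T)
    (hO : v ∉ O) : ∃ w ∈ U \ attractor E O U T, E v w := by
  by_contra! hall
  obtain ⟨n, hn⟩ := ((Set.toFinite {w | w ∈ U ∧ E v w}).image (attractorRank E O U T)).bddAbove
  refine hv.2 (Set.mem_iUnion.2 ⟨n + 1, Or.inr ⟨hv.1, Or.inr ⟨hO, fun w hw he => ?_⟩⟩⟩)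
  have hwA : w ∈ attractor E O U T := not_not.1 fun h => hall w ⟨hw, h⟩ he
  exact attractorLevel_mono (hn ⟨w, ⟨hw, he⟩, rfl⟩) (mem_attractorLevel_attractorRank hwA)

theorem IsSubgame.diff_attractor [Finite V] (hU : IsSubgame E U) :
    IsSubgame E (U \ attractor E O U T) := fun v hv => by
  by_cases hO : v ∈ O
  · obtain ⟨w, hw, he⟩ := hU v hv.1
    exact ⟨w, mem_diff_attractor_of_mem hv hO he hw, he⟩
  · exact exists_mem_diff_attractor_of_notMem hv hO

theorem diff_attractor_ssubset (hvU : v ∈ U) (hvT : v ∈ T) : U \ attractor E O U T ⊂ U :=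
  ⟨Set.sdiff_subset, fun h => (h hvU).2 (subset_attractor hvT)⟩

variable {Win : (ℕ → V) → Prop}

theorem IsWinningStrategy.attractor (h : IsWinningStrategy E O U Win T σ)
    (hWin : PrefixIndependent Win) :
    IsWinningStrategy E O U Win (attractor E O U T) (attractorStrategy E O U T σ) := by
  have hσ' := isStrategyIn_attractorStrategy h.subset h.isStrategyIn (T := T)
  have hT' := h.extend subset_rfl (fun _ _ _ w hw _ => hw) hσ'
    fun v hv _ => attractorStrategy_of_notMem fun h => h.2 hv
  refine ⟨attractor_subset h.subset, hσ', fun v hv hO => ?_, fun v hv hO w hw he => ?_,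
    fun π hπ h0 => ?_⟩
  · by_cases hvT : v ∈ T
    · exact subset_attractor (hT'.mem_own v hvT hO)
    · exact (attractorStrategy_spec hv hvT hO).2.1
  · by_cases hvT : v ∈ T
    · exact subset_attractor (hT'.mem_opp v hvT hO w hw he)
    · exact ((attractorRank_lt_of_mem_attractor hv hvT).2 hO w hw he).1
  · obtain ⟨m, -, hm⟩ := hπ.exists_mem_of_mem_attractor h0
    exact hT'.wins_of_mem hWin hπ hm

/-- A play either enters the attractor, hence `T`, infinitely often, or eventually stays
outside it. -/
theorem exists_isWinningStrategy_of_diff_attractor (hU : IsSubgame E U) (hTU : T ⊆ U)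
    (hσ : IsWinningStrategy E O (U \ attractor E O U T) Win (U \ attractor E O U T) σ)
    (hT : ∀ π : ℕ → V, (∀ n, π n ∈ U) → {n | π n ∈ T}.Infinite → Win π)
    (hWin : PrefixIndependent Win) : ∃ σ', IsWinningStrategy E O U Win U σ' := by
  classical
  set A := attractor E O U T
  obtain ⟨δ, hδ⟩ := hU.exists_isStrategyIn O
  have hτ : IsStrategyIn E O U ((U \ A).piecewise σ δ) := fun v hv hO => by
    by_cases hvA : v ∈ U \ A
    · rw [Set.piecewise_eq_of_mem _ _ _ hvA]
      exact (hσ.isStrategyIn v hvA hO).imp_right And.left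
    · rw [Set.piecewise_eq_of_notMem _ _ _ hvA]
      exact hδ v hv hO
  have hσ' := isStrategyIn_attractorStrategy hTU hτ
  refine ⟨_, subset_rfl, hσ', fun v hv hO => (hσ' v hv hO).2, fun _ _ _ w hw _ => hw,
    fun π hπ _ => ?_⟩
  by_cases hrec : ∀ k, ∃ m, k ≤ m ∧ π m ∈ A
  · refine hT π (fun n => (hπ n).1) (Set.infinite_of_forall_exists_gt fun k => ?_)
    obtain ⟨m, hkm, hm⟩ := hrec (k + 1)
    obtain ⟨m', hmm', hm'⟩ := hπ.exists_mem_of_mem_attractor hm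
    exact ⟨m', hm', by omega⟩
  push Not at hrec
  obtain ⟨k, hk⟩ := hrec
  have hout (n : ℕ) : π (k + n) ∈ U \ A := ⟨(hπ (k + n)).1, hk _ (Nat.le_add_right k n)⟩
  refine (hWin π k).1 (hσ.wins _ ((hπ.shift k).restrict hout fun n _ => ?_) (hout 0))
  rw [attractorStrategy_of_notMem fun h => (hout n).2 h.1,
    Set.piecewise_eq_of_mem _ _ _ (hout n)]

end Attractor

section Parity

theorem wins0_iff_even {Ω : V → ℕ} {π : ℕ → V} {p : ℕ} (hle : ∀ n, Ω (π n) ≤ p)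
    (hinf : {n | Ω (π n) = p}.Infinite) : Wins0 Ω π ↔ Even p := by
  rw [Wins0, IsGreatest.csSup_eq ⟨hinf, fun q hq => ?_⟩]
  obtain ⟨n, rfl⟩ := hq.nonempty
  exact hle n

/-- Player `false` owns `P` and player `true` its complement. -/
def owned (P : Set V) : Bool → Set V
  | false => P
  | true => Pᶜ

def Wins (Ω : V → ℕ) : Bool → (ℕ → V) → Prop
  | false => Wins0 Ω
  | true => fun π => ¬ Wins0 Ω π

variable {E : V → V → Prop} {P : Set V} {Ω : V → ℕ} {U : Set V} {v : V}

@[simp]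
theorem notMem_owned {b : Bool} : v ∉ owned P b ↔ v ∈ owned P (!b) := by
  cases b <;> simp [owned]

theorem prefixIndependent_wins (b : Bool) : PrefixIndependent (Wins Ω b) := fun π k => by
  have hset : {p | {n | Ω (π (k + n)) = p}.Infinite} = {p | {n | Ω (π n) = p}.Infinite} :=
    Set.ext fun p => Nat.infinite_setOf_add_iff (Q := fun n => Ω (π n) = p) k
  have h : Wins0 Ω (fun n => π (k + n)) ↔ Wins0 Ω π := by
    rw [Wins0, Wins0, hset]
  cases b
  · exact h
  · exact not_congr h

theorem wins_decide_odd {π : ℕ → V} {p : ℕ} (hle : ∀ n, Ω (π n) ≤ p)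
    (hinf : {n | Ω (π n) = p}.Infinite) : Wins Ω (decide (Odd p)) π := by
  have h := wins0_iff_even hle hinf
  by_cases hp : Odd p <;> simpa [Wins, hp, ← Nat.not_odd_iff_even] using h

variable (E P Ω) in
/-- Stated for both orientations, so that the induction step may put either player first. -/
def IsDetermined (U : Set V) : Prop :=
  ∀ i : Bool, ∃ X Y, X ∪ Y = U ∧
    (∃ σ, IsWinningStrategy E (owned P i) U (Wins Ω i) X σ) ∧
    (∃ τ, IsWinningStrategy E (owned P (!i)) U (Wins Ω (!i)) Y τ)

theorem isDetermined_of_player (i : Bool) (h : ∃ X Y, X ∪ Y = U ∧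
      (∃ σ, IsWinningStrategy E (owned P i) U (Wins Ω i) X σ) ∧
      (∃ τ, IsWinningStrategy E (owned P (!i)) U (Wins Ω (!i)) Y τ)) :
    IsDetermined E P Ω U := fun j => by
  obtain ⟨X, Y, hXY, hX, hY⟩ := h
  rcases Bool.eq_or_eq_not j i with rfl | rfl
  · exact ⟨X, Y, hXY, hX, hY⟩
  · exact ⟨Y, X, Set.union_comm X Y ▸ hXY, hY, by simpa using hX⟩

theorem isDetermined_empty : IsDetermined E P Ω ∅ := fun _ =>
  ⟨∅, ∅, Set.union_empty ∅, ⟨id, isWinningStrategy_empty fun _ h _ => h.elim⟩,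
    ⟨id, isWinningStrategy_empty fun _ h _ => h.elim⟩⟩

theorem isDetermined_of_ssubset [Finite V] (hU : IsSubgame E U)
    (ih : ∀ U' ⊂ U, IsSubgame E U' → IsDetermined E P Ω U') : IsDetermined E P Ω U := by
  rcases U.eq_empty_or_nonempty with rfl | hne
  · exact isDetermined_empty
  obtain ⟨v₀, hv₀, hmax⟩ := Set.exists_max_image U Ω U.toFinite hne
  set i := decide (Odd (Ω v₀))
  set N := {v ∈ U | Ω v = Ω v₀}
  have hN (π : ℕ → V) (hπ : ∀ n, π n ∈ U) (hinf : {n | π n ∈ N}.Infinite) : Wins Ω i π :=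
    wins_decide_odd (fun n => hmax _ (hπ n)) (hinf.mono fun _ hn => hn.2)
  set A := attractor E (owned P i) U N
  obtain ⟨Yi, Yj, hY, ⟨τi, hτi⟩, ⟨τj, hτj⟩⟩ :=
    ih (U \ A) (diff_attractor_ssubset hv₀ (show v₀ ∈ N from ⟨hv₀, rfl⟩)) hU.diff_attractor i
  rcases Yj.eq_empty_or_nonempty with rfl | ⟨y, hy⟩
  · rw [Set.union_empty] at hY
    subst hY
    obtain ⟨σ, hσ⟩ := exists_isWinningStrategy_of_diff_attractor hU (Set.sep_subset _ _) hτi hN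
      (prefixIndependent_wins i)
    obtain ⟨τ, hτ⟩ := hU.exists_isStrategyIn (owned P (!i))
    exact isDetermined_of_player i ⟨U, ∅, Set.union_empty U, ⟨σ, hσ⟩,
      ⟨τ, isWinningStrategy_empty hτ⟩⟩
  set B := attractor E (owned P (!i)) U Yj
  have hYjU : Yj ⊆ U := hτj.subset.trans Set.sdiff_subset
  obtain ⟨Zi, Zj, hZ, ⟨ρi, hρi⟩, ⟨ρj, hρj⟩⟩ :=
    ih (U \ B) (diff_attractor_ssubset (hYjU hy) hy) hU.diff_attractor i
  obtain ⟨σi, hσi⟩ := hρi.exists_extend hU Set.sdiff_subset fun v hv hO w hw he =>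
    mem_diff_attractor_of_mem (hρi.subset hv) (notMem_owned.1 hO) he hw
  obtain ⟨σj, hσj⟩ := hτj.exists_extend hU Set.sdiff_subset fun v hv hO w hw he =>
    mem_diff_attractor_of_mem (hτj.subset hv) (by simpa using hO) he hw
  refine isDetermined_of_player i ⟨Zi, Zj ∪ B, ?_, ⟨σi, hσi⟩,
    (hσj.attractor (prefixIndependent_wins _)).exists_union hρj (prefixIndependent_wins _)⟩
  rw [← Set.union_assoc, hZ, Set.sdiff_union_of_subset (attractor_subset hYjU)]

theorem isDetermined [Finite V] (hU : IsSubgame E U) : IsDetermined E P Ω U := by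
  induction U using WellFoundedLT.induction with
  | _ U ih => exact isDetermined_of_ssubset hU fun U' hU' => ih U' hU'

end Parity
end ParityGame

section Plays

variable {V : Type*} {V₀ : Set V} {E : V → V → Prop} {σ τ : V → V}

theorem ConsistentPlay.isPlay {v : V} {π : ℕ → V} (h : ConsistentPlay V₀ E σ v π) :
    ParityGame.IsPlay E V₀ Set.univ σ π :=
  fun n => ⟨trivial, h.2 n⟩

theorem ParityGame.IsWinningStrategy.isStrategy {Win : (ℕ → V) → Prop} {W : Set V}
    (h : ParityGame.IsWinningStrategy E V₀ Set.univ Win W σ) : IsStrategy V₀ E σ :=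
  fun v hv => (h.isStrategyIn v trivial hv).1

theorem exists_consistentPlay_consistentPlay (hσ : IsStrategy V₀ E σ) (hτ : IsStrategy V₀ᶜ E τ)
    (v : V) : ∃ π, ConsistentPlay V₀ E σ v π ∧ ConsistentPlay V₀ᶜ E τ v π := by
  classical
  obtain ⟨f, hfσ, hfτ⟩ : ∃ f : V → V, (∀ u ∈ V₀, f u = σ u) ∧ ∀ u ∉ V₀, f u = τ u :=
    ⟨V₀.piecewise σ τ, fun _ => Set.piecewise_eq_of_mem _ _ _,
      fun _ => Set.piecewise_eq_of_notMem _ _ _⟩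
  have hstep (n : ℕ) : f^[n + 1] v = f (f^[n] v) := Function.iterate_succ_apply' f n v
  have hedge (n : ℕ) : E (f^[n] v) (f^[n + 1] v) := by
    rw [hstep]
    by_cases h : f^[n] v ∈ V₀
    · exact hfσ _ h ▸ hσ _ h
    · exact hfτ _ h ▸ hτ _ h
  exact ⟨fun n => f^[n] v, ⟨rfl, fun n => ⟨hedge n, fun h => (hstep n).trans (hfσ _ h)⟩⟩,
    ⟨rfl, fun n => ⟨hedge n, fun h => (hstep n).trans (hfτ _ h)⟩⟩⟩

end Plays

/-- Positional determinacy of finite parity games: the winning regions of the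
two players partition the set of positions. -/
theorem parity_game_determinacy (V : Type*) [Fintype V]
    (V₀ V₁ : Set V) (hcover : V₀ ∪ V₁ = Set.univ) (hdisj : Disjoint V₀ V₁)
    (E : V → V → Prop) (htotal : ∀ v, ∃ w, E v w) (Ω : V → ℕ) :
    ({v | ∃ σ, IsStrategy V₀ E σ ∧
        ∀ π, ConsistentPlay V₀ E σ v π → Wins0 Ω π} ∪
     {v | ∃ σ, IsStrategy V₁ E σ ∧
        ∀ π, ConsistentPlay V₁ E σ v π → ¬ Wins0 Ω π} = Set.univ) ∧
    Disjoint
      {v | ∃ σ, IsStrategy V₀ E σ ∧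
        ∀ π, ConsistentPlay V₀ E σ v π → Wins0 Ω π}
      {v | ∃ σ, IsStrategy V₁ E σ ∧
        ∀ π, ConsistentPlay V₁ E σ v π → ¬ Wins0 Ω π} := by
  obtain rfl : V₁ = V₀ᶜ := (IsCompl.compl_eq ⟨hdisj, codisjoint_iff.2 hcover⟩).symm
  refine ⟨Set.eq_univ_of_forall fun v => ?_, Set.disjoint_left.2 ?_⟩
  · obtain ⟨X, Y, hXY, ⟨σ, hσ⟩, ⟨τ, hτ⟩⟩ := ParityGame.isDetermined (P := V₀) (Ω := Ω)
      (fun v _ => (htotal v).imp fun _ he => ⟨trivial, he⟩) false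
    have hv : v ∈ X ∪ Y := hXY ▸ Set.mem_univ v
    rcases hv with hv | hv
    · exact Or.inl ⟨σ, hσ.isStrategy, fun π hπ => hσ.wins π (ConsistentPlay.isPlay hπ) (hπ.1 ▸ hv)⟩
    · exact Or.inr ⟨τ, hτ.isStrategy, fun π hπ => hτ.wins π (ConsistentPlay.isPlay hπ) (hπ.1 ▸ hv)⟩
  · rintro v ⟨σ, hσ, hwin⟩ ⟨τ, hτ, hlose⟩
    obtain ⟨π, hπσ, hπτ⟩ := exists_consistentPlay_consistentPlay hσ hτ v
    exact hlose π hπτ (hwin π hπσ)
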